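/- arXiv:1509.04199 — 6 statements merged into one kernel-verified Lean document; each statement's English description precedes it below -/
import Mathlib

section
/- For every finite nonempty set D of integers ≥ 2 and every finite set S of positive integers, the Sprague-Grundy sequence of the game i-Mark(S,D) is aperiodic: there do not exist q ≥ 0 and p ≥ 1 such that g(n) = g(n+p) for all n ≥ q. -/
/-- The minimum excludant of a finite set of naturals. -/
noncomputable def mex (s : Finset ℕ) : ℕ := sInf {k : ℕ | k ∉ s}

/-- Options of the game i-Mark(S,D) from a heap of `n` tokens:
move to `n - s` for `s ∈ S` (with `1 ≤ s ≤ n`), or to `n / d` for `d ∈ D`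
(with `2 ≤ d` and `d ∣ n`, `n ≥ 1`). -/
def iMarkOptions (S D : Finset ℕ) (n : ℕ) : Finset ℕ :=
  ((S.filter (fun s => 1 ≤ s ∧ s ≤ n)).image (fun s => n - s)) ∪
  ((D.filter (fun d => 2 ≤ d ∧ d ∣ n ∧ 1 ≤ n)).image (fun d => n / d))

theorem iMarkOptions_lt {S D : Finset ℕ} {n m : ℕ} (h : m ∈ iMarkOptions S D n) : m < n := by
  simp only [iMarkOptions, Finset.mem_union, Finset.mem_image, Finset.mem_filter] at h
  rcases h with ⟨s, ⟨_, h1, h2⟩, rfl⟩ | ⟨d, ⟨_, h2, hd, hn⟩, rfl⟩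
  · omega
  · exact Nat.div_lt_self hn h2

/-- The Sprague-Grundy value of a heap of `n` tokens in the game i-Mark(S,D). -/
noncomputable def grundy (S D : Finset ℕ) (n : ℕ) : ℕ :=
  mex ((iMarkOptions S D n).attach.image (fun m => grundy S D m.1))
termination_by n
decreasing_by exact iMarkOptions_lt m.2

/-- `misereP S D n` means `n` is a P-position of i-Mark(S,D) under misère convention:
`n` has at least one option and every option is an N-position. -/
def misereP (S D : Finset ℕ) (n : ℕ) : Prop :=
  (iMarkOptions S D n).Nonempty ∧
    ∀ m : {x // x ∈ iMarkOptions S D n}, ¬ misereP S D m.1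
termination_by n
decreasing_by exact iMarkOptions_lt m.2

/-!
Choose `d ∈ D` and a positive multiple `m ≥ q` of the period `p`. Then `d * m` differs from `m`
by a multiple of `p`, so periodicity forces `g (d * m) = g m`; but `m = (d * m) / d` is an
option of `d * m`, and a Grundy value never equals the Grundy value of an option.
-/

lemma mex_notMem (s : Finset ℕ) : mex s ∉ s :=
  Nat.sInf_mem (Infinite.exists_notMem_finset s)

lemma grundy_ne_of_mem_iMarkOptions {S D : Finset ℕ} {n m : ℕ} (h : m ∈ iMarkOptions S D n) :
    grundy S D n ≠ grundy S D m := by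
  intro heq
  apply mex_notMem ((iMarkOptions S D n).attach.image (fun m => grundy S D m.1))
  rw [← grundy, heq]
  exact Finset.mem_image_of_mem _ (Finset.mem_attach _ ⟨m, h⟩)

lemma mem_iMarkOptions_mul_self {S D : Finset ℕ} {d m : ℕ} (hd : d ∈ D) (hd2 : 2 ≤ d)
    (hm : 0 < m) : m ∈ iMarkOptions S D (d * m) := by
  simp only [iMarkOptions, Finset.mem_union, Finset.mem_image, Finset.mem_filter]
  exact Or.inr ⟨d, ⟨hd, hd2, dvd_mul_right d m, Nat.mul_pos (by omega) hm⟩,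
    Nat.mul_div_cancel_left m (by omega)⟩

lemma eq_add_mul_of_eventually_periodic {α : Type*} {f : ℕ → α} {q p : ℕ}
    (h : ∀ n, q ≤ n → f n = f (n + p)) (k : ℕ) {n : ℕ} (hn : q ≤ n) : f n = f (n + k * p) := by
  induction k with
  | zero => simp
  | succ k ih => rw [ih, h _ (by omega), add_mul, one_mul, add_assoc]

theorem iMark_grundy_aperiodic_general (S D : Finset ℕ)
    (hD : ∀ d ∈ D, 2 ≤ d) (hDne : D.Nonempty) :
    ¬ ∃ q p : ℕ, 1 ≤ p ∧ ∀ n, q ≤ n → grundy S D n = grundy S D (n + p) := by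
  rintro ⟨q, p, hp, h⟩
  obtain ⟨d, hd⟩ := hDne
  have hd2 : 2 ≤ d := hD d hd
  set m := (q + 1) * p
  have hqm : q ≤ m := (Nat.le_succ q).trans (Nat.le_mul_of_pos_right _ hp)
  have hdm : m + ((d - 1) * (q + 1)) * p = d * m := by
    obtain ⟨e, rfl⟩ : ∃ e, d = e + 1 := ⟨d - 1, by omega⟩
    simp only [m, Nat.add_sub_cancel]
    ring
  have hperiodic : grundy S D m = grundy S D (d * m) :=
    hdm ▸ eq_add_mul_of_eventually_periodic h _ hqm
  exact grundy_ne_of_mem_iMarkOptions (mem_iMarkOptions_mul_self hd hd2 (by positivity))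
    hperiodic.symm

/-- The Sprague-Grundy sequence of i-Mark(S,D) is aperiodic for any nonempty D. -/
theorem iMark_grundy_aperiodic (S D : Finset ℕ)
    (hS : ∀ s ∈ S, 1 ≤ s) (hD : ∀ d ∈ D, 2 ≤ d) (hDne : D.Nonempty) :
    ¬ ∃ q p : ℕ, 1 ≤ p ∧ ∀ n, q ≤ n → grundy S D n = grundy S D (n + p) :=
  iMark_grundy_aperiodic_general S D hD hDne
end

section
/- In the game i-Mark({1},{2}), the set of P-positions (positions with Sprague-Grundy value 0 under normal play) is exactly {0, 2} ∪ {2k+1 : k ≥ 2}, and the set of N-positions is {1, 3} ∪ {2k : k ≥ 2}. -/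
theorem mex_eq_zero_iff (s : Finset ℕ) : mex s = 0 ↔ 0 ∉ s := by
  refine ⟨fun h h0 => ?_, fun h => Nat.sInf_eq_zero.mpr (Or.inl h)⟩
  obtain ⟨k, hk⟩ := Infinite.exists_notMem_finset s
  have hmem : mex s ∈ {k : ℕ | k ∉ s} := Nat.sInf_mem ⟨k, hk⟩
  exact hmem (h ▸ h0)

theorem grundy_eq_zero_iff (S D : Finset ℕ) (n : ℕ) :
    grundy S D n = 0 ↔ ∀ m ∈ iMarkOptions S D n, grundy S D m ≠ 0 := by
  rw [grundy, mex_eq_zero_iff]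
  simp

theorem mem_iMarkOptions_one_two {n m : ℕ} :
    m ∈ iMarkOptions {1} {2} n ↔ (1 ≤ n ∧ m = n - 1) ∨ (2 ∣ n ∧ 1 ≤ n ∧ m = n / 2) := by
  simp only [iMarkOptions, Finset.mem_union, Finset.mem_image, Finset.mem_filter,
    Finset.mem_singleton]
  constructor
  · rintro (⟨s, ⟨rfl, _, hs⟩, rfl⟩ | ⟨d, ⟨rfl, _, hd, hn⟩, rfl⟩)
    · exact Or.inl ⟨hs, rfl⟩
    · exact Or.inr ⟨hd, hn, rfl⟩
  · rintro (⟨h1, rfl⟩ | ⟨hd, h1, rfl⟩)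
    · exact Or.inl ⟨1, ⟨rfl, le_refl 1, h1⟩, rfl⟩
    · exact Or.inr ⟨2, ⟨rfl, le_refl 2, hd, h1⟩, rfl⟩

theorem grundy_one_two_eq_zero_iff (n : ℕ) :
    grundy {1} {2} n = 0 ↔ n = 0 ∨ n = 2 ∨ (n % 2 = 1 ∧ 5 ≤ n) := by
  induction n using Nat.strong_induction_on with
  | _ n ih =>
    have h_opts : (∀ m ∈ iMarkOptions {1} {2} n, grundy {1} {2} m ≠ 0) ↔
        ∀ m, (1 ≤ n ∧ m = n - 1) ∨ (2 ∣ n ∧ 1 ≤ n ∧ m = n / 2) →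
          ¬(m = 0 ∨ m = 2 ∨ (m % 2 = 1 ∧ 5 ≤ m)) := by
      refine forall_congr' fun m => ?_
      rw [mem_iMarkOptions_one_two]
      refine imp_congr_right fun hm => ?_
      rw [Ne, ih m (by omega)]
    rw [grundy_eq_zero_iff, h_opts]
    constructor
    · intro h
      have h_pred := h (n - 1)
      have h_half := h (n / 2)
      omega
    · rintro hn m (⟨_, rfl⟩ | ⟨_, _, rfl⟩) <;> omega

/-- P- and N-positions of i-Mark({1},{2}). -/
theorem iMark_1_2_outcomes :
    (∀ n : ℕ, grundy {1} {2} n = 0 ↔ (n = 0 ∨ n = 2 ∨ ∃ k : ℕ, 2 ≤ k ∧ n = 2 * k + 1)) ∧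
    (∀ n : ℕ, grundy {1} {2} n ≠ 0 ↔ (n = 1 ∨ n = 3 ∨ ∃ k : ℕ, 2 ≤ k ∧ n = 2 * k)) := by
  have h_odd (n : ℕ) : (∃ k : ℕ, 2 ≤ k ∧ n = 2 * k + 1) ↔ n % 2 = 1 ∧ 5 ≤ n :=
    ⟨fun ⟨k, hk, hn⟩ => by omega, fun hn => ⟨n / 2, by omega, by omega⟩⟩
  have h_even (n : ℕ) : (∃ k : ℕ, 2 ≤ k ∧ n = 2 * k) ↔ n % 2 = 0 ∧ 4 ≤ n :=
    ⟨fun ⟨k, hk, hn⟩ => by omega, fun hn => ⟨n / 2, by omega, by omega⟩⟩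
  refine ⟨fun n => ?_, fun n => ?_⟩
  · rw [grundy_one_two_eq_zero_iff, h_odd]
  · rw [Ne, grundy_one_two_eq_zero_iff, h_even]
    omega
end

section
/- In the game i-Mark({1},{2}), for every position n, g(n) = 2 if and only if n is even and either (i) the odd part of n equals 3 and the 2-adic valuation of n is odd, or (ii) the odd part of n is not 3 and the 2-adic valuation of n is even (and positive). -/
/-!
In i-Mark({1},{2}) an odd heap has the single option `n - 1`, so its value is `1` or `0`
according as `g (n - 1)` is `0` or not. One checks `g 0, …, g 4 = 0, 1, 0, 1, 2`; from there on
every odd heap has value `0` and every even heap a nonzero value. Hence for `h ≥ 3` the options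
of `2h` have values `0` and `g h`, so `g (2h) = 2 ↔ g h = 1`. For odd `h` this says `h = 3`; for
even `h ≥ 4` it says `g h ≠ 2`. On the arithmetic side, doubling `n > 0` keeps the odd part and
raises the valuation by one, which turns the criterion into exactly the same recursion.
-/

theorem mex_eq_of_notMem_of_forall_lt_mem {s : Finset ℕ} {m : ℕ} (hm : m ∉ s)
    (hlt : ∀ k < m, k ∈ s) : mex s = m :=
  le_antisymm (Nat.sInf_le hm) (le_csInf ⟨m, hm⟩ fun k hk => not_lt.1 fun h => hk (hlt k h))

theorem mex_empty : mex ∅ = 0 :=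
  mex_eq_of_notMem_of_forall_lt_mem (Finset.notMem_empty 0) (by simp)

theorem mex_singleton (a : ℕ) : mex {a} = if a = 0 then 1 else 0 := by
  split_ifs with ha
  · exact mex_eq_of_notMem_of_forall_lt_mem (by simp [ha]) (by simp [ha])
  · exact mex_eq_of_notMem_of_forall_lt_mem (by simpa [eq_comm] using ha) (by simp)

theorem mex_zero_pair (b : ℕ) : mex {0, b} = if b = 1 then 2 else 1 := by
  split_ifs with hb
  · refine mex_eq_of_notMem_of_forall_lt_mem (by simp [hb]) ?_
    intro k hk
    interval_cases k <;> simp [hb]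
  · refine mex_eq_of_notMem_of_forall_lt_mem (by simpa [eq_comm] using hb) ?_
    simp

theorem grundy_eq_mex_image (S D : Finset ℕ) (n : ℕ) :
    grundy S D n = mex ((iMarkOptions S D n).image (grundy S D)) := by
  rw [grundy]
  conv_rhs => rw [← Finset.attach_image_val (s := iMarkOptions S D n), Finset.image_image]
  rfl

def GrundyTwoCriterion (n : ℕ) : Prop :=
  Even n ∧ ((ordCompl[2] n = 3 ∧ Odd (padicValNat 2 n)) ∨
    (ordCompl[2] n ≠ 3 ∧ Even (padicValNat 2 n) ∧ 0 < padicValNat 2 n))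

theorem padicValNat_two_two_mul {m : ℕ} (hm : m ≠ 0) :
    padicValNat 2 (2 * m) = padicValNat 2 m + 1 := by
  rw [padicValNat.mul two_ne_zero hm, padicValNat_self, add_comm]

theorem ordCompl_two_two_mul (m : ℕ) : ordCompl[2] (2 * m) = ordCompl[2] m := by
  simpa using Nat.ordCompl_self_pow_mul m 1 Nat.prime_two

theorem grundyTwoCriterion_two_mul_of_odd {m : ℕ} (hm : Odd m) :
    GrundyTwoCriterion (2 * m) ↔ m = 3 := by
  have hndvd : ¬2 ∣ m := Nat.not_even_iff_odd.2 hm ∘ even_iff_two_dvd.2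
  have hv : padicValNat 2 m = 0 := padicValNat.eq_zero_of_not_dvd hndvd
  have hoc : ordCompl[2] m = m := by simp [Nat.factorization_eq_zero_of_not_dvd hndvd]
  simp [GrundyTwoCriterion, padicValNat_two_two_mul hm.pos.ne',
    ordCompl_two_two_mul, hv, hoc]

theorem grundyTwoCriterion_two_mul_of_even {m : ℕ} (hm : Even m) (hm0 : m ≠ 0) :
    GrundyTwoCriterion (2 * m) ↔ ¬GrundyTwoCriterion m := by
  have hv : 0 < padicValNat 2 m := one_le_padicValNat_of_dvd hm0 (even_iff_two_dvd.1 hm)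
  simp only [GrundyTwoCriterion, padicValNat_two_two_mul hm0, ordCompl_two_two_mul,
    Nat.even_add_one, Nat.odd_add_one, even_two_mul, hm, true_and, hv, and_true]
  by_cases h3 : ordCompl[2] m = 3 <;> simp [h3]

section OneTwo

theorem iMarkOptions_one_two_zero : iMarkOptions {1} {2} 0 = ∅ := by decide

theorem iMarkOptions_one_two_two_mul_add_one (m : ℕ) :
    iMarkOptions {1} {2} (2 * m + 1) = {2 * m} := by
  ext x
  simp only [iMarkOptions, Finset.mem_union, Finset.mem_image, Finset.mem_filter,
    Finset.mem_singleton]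
  constructor
  · rintro (⟨s, ⟨rfl, -⟩, rfl⟩ | ⟨d, ⟨rfl, -, hdvd, -⟩, rfl⟩) <;> omega
  · rintro rfl
    exact Or.inl ⟨1, ⟨rfl, by omega⟩, by omega⟩

theorem iMarkOptions_one_two_two_mul {m : ℕ} (hm : m ≠ 0) :
    iMarkOptions {1} {2} (2 * m) = {2 * m - 1, m} := by
  ext x
  simp only [iMarkOptions, Finset.mem_union, Finset.mem_image, Finset.mem_filter,
    Finset.mem_insert, Finset.mem_singleton]
  constructor
  · rintro (⟨s, ⟨rfl, -⟩, rfl⟩ | ⟨d, ⟨rfl, -⟩, rfl⟩) <;> omega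
  · rintro (rfl | rfl)
    · exact Or.inl ⟨1, ⟨rfl, by omega⟩, rfl⟩
    · exact Or.inr ⟨2, ⟨rfl, by omega⟩, by omega⟩

local notation "g" => grundy {1} {2}

theorem grundy_one_two_zero : g 0 = 0 := by
  rw [grundy_eq_mex_image, iMarkOptions_one_two_zero, Finset.image_empty, mex_empty]

theorem grundy_one_two_two_mul_add_one (m : ℕ) :
    g (2 * m + 1) = if g (2 * m) = 0 then 1 else 0 := by
  rw [grundy_eq_mex_image, iMarkOptions_one_two_two_mul_add_one, Finset.image_singleton,
    mex_singleton]

theorem grundy_one_two_two_mul {m : ℕ} (hm : m ≠ 0) :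
    g (2 * m) = mex {g (2 * m - 1), g m} := by
  rw [grundy_eq_mex_image, iMarkOptions_one_two_two_mul hm, Finset.image_insert,
    Finset.image_singleton]

theorem grundy_one_two_two_mul_add_one_le_one (m : ℕ) : g (2 * m + 1) ≤ 1 := by
  rw [grundy_one_two_two_mul_add_one]
  split_ifs <;> simp

theorem grundy_one_two_one : g 1 = 1 := by
  simpa [grundy_one_two_zero] using grundy_one_two_two_mul_add_one 0

theorem grundy_one_two_two : g 2 = 0 := by
  simpa [grundy_one_two_zero, grundy_one_two_one, mex_singleton] using
    grundy_one_two_two_mul one_ne_zero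

theorem grundy_one_two_three : g 3 = 1 := by
  simpa [grundy_one_two_two] using grundy_one_two_two_mul_add_one 1

theorem grundy_one_two_four : g 4 = 2 := by
  rw [grundy_one_two_two_mul two_ne_zero, show 2 * 2 - 1 = 3 from rfl, grundy_one_two_three,
    grundy_one_two_two, Finset.pair_comm, mex_zero_pair, if_pos rfl]

theorem grundy_one_two_two_mul_add_one_eq_zero {m : ℕ} (hm : 2 ≤ m) : g (2 * m + 1) = 0 := by
  induction m, hm using Nat.le_induction with
  | base => simpa [grundy_one_two_four] using grundy_one_two_two_mul_add_one 2
  | succ m hm ih =>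
    have hnext : g (2 * (m + 1)) ≠ 0 := by
      rw [grundy_one_two_two_mul m.succ_ne_zero, show 2 * (m + 1) - 1 = 2 * m + 1 by omega, ih,
        mex_zero_pair]
      split_ifs <;> simp
    rw [grundy_one_two_two_mul_add_one, if_neg hnext]

theorem grundy_one_two_two_mul_of_three_le {m : ℕ} (hm : 3 ≤ m) :
    g (2 * m) = if g m = 1 then 2 else 1 := by
  rw [grundy_one_two_two_mul (by omega), show 2 * m - 1 = 2 * (m - 1) + 1 by omega,
    grundy_one_two_two_mul_add_one_eq_zero (by omega), mex_zero_pair]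

theorem grundy_one_two_two_mul_eq_one_or_eq_two {m : ℕ} (hm : 2 ≤ m) :
    g (2 * m) = 1 ∨ g (2 * m) = 2 := by
  obtain rfl | hm := hm.eq_or_lt
  · exact Or.inr grundy_one_two_four
  · rw [grundy_one_two_two_mul_of_three_le hm]
    split_ifs <;> simp

theorem grundy_one_two_two_mul_add_one_eq_one_iff (m : ℕ) : g (2 * m + 1) = 1 ↔ m ≤ 1 := by
  rcases lt_or_ge m 2 with hm | hm
  · interval_cases m <;> simp [grundy_one_two_one, grundy_one_two_three]
  · simp only [grundy_one_two_two_mul_add_one_eq_zero hm, zero_ne_one, false_iff]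
    omega

theorem grundy_one_two_eq_two_iff (n : ℕ) : g n = 2 ↔ GrundyTwoCriterion n := by
  induction n using Nat.strong_induction_on with
  | _ n ih =>
  obtain ⟨m, rfl | rfl⟩ := Nat.even_or_odd' n
  · rcases lt_or_ge m 3 with hm | hm
    · interval_cases m
      · simp [grundy_one_two_zero, GrundyTwoCriterion]
      · rw [grundy_one_two_two, grundyTwoCriterion_two_mul_of_odd odd_one]
        simp
      · rw [grundy_one_two_four, grundyTwoCriterion_two_mul_of_even even_two two_ne_zero,
          ← ih 2 (by norm_num), grundy_one_two_two]
        simp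
    rw [grundy_one_two_two_mul_of_three_le hm]
    obtain ⟨k, rfl | rfl⟩ := Nat.even_or_odd' m
    · rw [grundyTwoCriterion_two_mul_of_even (even_two_mul k) (by omega), ← ih (2 * k) (by omega)]
      rcases grundy_one_two_two_mul_eq_one_or_eq_two (m := k) (by omega) with hk | hk <;>
        simp [hk]
    · have hk := grundy_one_two_two_mul_add_one_eq_one_iff k
      rw [grundyTwoCriterion_two_mul_of_odd (odd_two_mul_add_one k)]
      split_ifs <;> omega
  · have hle := grundy_one_two_two_mul_add_one_le_one m
    simp only [GrundyTwoCriterion, Nat.not_even_two_mul_add_one, false_and, iff_false]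
    omega

end OneTwo

/-- Characterization of positions of g-value 2 in i-Mark({1},{2}). -/
theorem iMark_1_2_grundy_eq_two (n : ℕ) :
    grundy {1} {2} n = 2 ↔ Even n ∧
      ((ordCompl[2] n = 3 ∧ Odd (padicValNat 2 n)) ∨
       (ordCompl[2] n ≠ 3 ∧ Even (padicValNat 2 n) ∧ 0 < padicValNat 2 n)) :=
  grundy_one_two_eq_two_iff n
end

section
/- In the game i-Mark({2,4},{2}), for every n ≥ 11 with n = 6q + r, 0 ≤ r ≤ 5: if r = 1 or r = 4 then g(n) = 0; if r = 2 or r = 3 then g(n) = 1; if r = 5 then g(n) = 2; and if r = 0 then g(n) ∈ {2,3}. -/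
/-! For `n ≥ 4` the options of `n` are `n - 2`, `n - 4` and, when `n` is even, `n / 2`. The
residues of these three heaps modulo 6 depend only on `n` modulo 12, so whether the mex of their
values lies in the set prescribed for `n` is a finite check over twelve residues. For `n ≥ 22`
all three heaps are at least 11, and the pattern propagates by strong induction from the range
`[11, 22)`, where it is read off the first 22 Grundy values. -/

theorem mex_eq_of_forall_lt_mem {s : Finset ℕ} {a : ℕ} (ha : a ∉ s) (hlt : ∀ b < a, b ∈ s) :
    mex s = a :=
  le_antisymm (Nat.sInf_le ha) <| le_of_not_gt fun h =>
    Nat.sInf_mem (s := {k | k ∉ s}) ⟨a, ha⟩ (hlt _ h)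

theorem grundy_eq_of_eqOn {S D : Finset ℕ} {n a : ℕ} {f : ℕ → ℕ}
    (hf : Set.EqOn (grundy S D) f (iMarkOptions S D n))
    (ha : a ∉ (iMarkOptions S D n).image f)
    (hlt : ∀ b < a, b ∈ (iMarkOptions S D n).image f) :
    grundy S D n = a := by
  rw [grundy_eq_mex_image, Finset.image_congr hf]
  exact mex_eq_of_forall_lt_mem ha hlt

theorem iMarkOptions_24_2 {n : ℕ} (hn : 4 ≤ n) :
    iMarkOptions {2, 4} {2} n = if 2 ∣ n then {n - 2, n - 4, n / 2} else {n - 2, n - 4} := by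
  ext m
  split_ifs <;> simp [iMarkOptions, or_and_right, exists_or] <;> omega

def grundyTable_24_2 (n : ℕ) : ℕ :=
  [0, 0, 1, 1, 2, 2, 0, 0, 1, 1, 3, 2, 2, 0, 1, 1, 0, 2, 2, 0, 1, 1].getD n 0

theorem grundyTable_24_2_isMex : ∀ n < 22,
    grundyTable_24_2 n ∉ (iMarkOptions {2, 4} {2} n).image grundyTable_24_2 ∧
      ∀ b < grundyTable_24_2 n, b ∈ (iMarkOptions {2, 4} {2} n).image grundyTable_24_2 := by
  decide

theorem grundy_24_2_eq_grundyTable {n : ℕ} (hn : n < 22) :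
    grundy {2, 4} {2} n = grundyTable_24_2 n := by
  induction n using Nat.strong_induction_on with
  | _ n ih =>
  have hmex := grundyTable_24_2_isMex n hn
  exact grundy_eq_of_eqOn
    (fun m hm => ih m (iMarkOptions_lt hm) ((iMarkOptions_lt hm).trans hn)) hmex.1 hmex.2

def grundyPattern_24_2 (n : ℕ) : Finset ℕ :=
  match n % 6 with
  | 0 => {2, 3}
  | 1 | 4 => {0}
  | 2 | 3 => {1}
  | _ => {2}

theorem grundyPattern_24_2_congr {a b : ℕ} (h : a % 6 = b % 6) :
    grundyPattern_24_2 a = grundyPattern_24_2 b := by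
  unfold grundyPattern_24_2
  rw [h]

/-- Here `r` is a heap size modulo 12; `r + 10` and `r + 8` stand for `r - 2` and `r - 4`
modulo 6. -/
theorem grundyPattern_24_2_mex_mem : ∀ r < 12,
    ∀ x ∈ grundyPattern_24_2 (r + 10), ∀ y ∈ grundyPattern_24_2 (r + 8),
      ∀ z ∈ grundyPattern_24_2 (r / 2), ∃ v ∈ grundyPattern_24_2 r,
        v ∉ (if 2 ∣ r then {x, y, z} else {x, y} : Finset ℕ) ∧
          ∀ b < v, b ∈ (if 2 ∣ r then {x, y, z} else {x, y} : Finset ℕ) := by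
  decide

theorem grundy_24_2_mem_grundyPattern {n : ℕ} (hn : 11 ≤ n) :
    grundy {2, 4} {2} n ∈ grundyPattern_24_2 n := by
  induction n using Nat.strong_induction_on with
  | _ n ih =>
  rcases lt_or_ge n 22 with hsmall | hlarge
  · rw [grundy_24_2_eq_grundyTable hsmall]
    interval_cases n <;> decide
  have hx := ih (n - 2) (by omega) (by omega)
  have hy := ih (n - 4) (by omega) (by omega)
  have hz := ih (n / 2) (by omega) (by omega)
  rw [grundyPattern_24_2_congr (b := n % 12 + 10) (by omega)] at hx
  rw [grundyPattern_24_2_congr (b := n % 12 + 8) (by omega)] at hy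
  rw [grundyPattern_24_2_congr (b := n % 12 / 2) (by omega)] at hz
  obtain ⟨v, hv, hvs, hlt⟩ :=
    grundyPattern_24_2_mex_mem (n % 12) (Nat.mod_lt _ (by norm_num)) _ hx _ hy _ hz
  rw [grundyPattern_24_2_congr (b := n % 12) (by omega)]
  convert hv
  have hdvd : 2 ∣ n % 12 ↔ 2 ∣ n := by omega
  rw [grundy_eq_mex_image, iMarkOptions_24_2 (by omega)]
  simp only [hdvd] at hvs hlt
  split_ifs at hvs hlt ⊢ <;>
    simpa only [Finset.image_insert, Finset.image_singleton] using mex_eq_of_forall_lt_mem hvs hlt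

/-- Sprague-Grundy values of i-Mark({2,4},{2}) for n ≥ 11. -/
theorem iMark_24_2_grundy (n : ℕ) (hn : 11 ≤ n) :
    ((n % 6 = 1 ∨ n % 6 = 4) → grundy {2, 4} {2} n = 0) ∧
    ((n % 6 = 2 ∨ n % 6 = 3) → grundy {2, 4} {2} n = 1) ∧
    (n % 6 = 5 → grundy {2, 4} {2} n = 2) ∧
    (n % 6 = 0 → grundy {2, 4} {2} n = 2 ∨ grundy {2, 4} {2} n = 3) := by
  have h := grundy_24_2_mem_grundyPattern hn
  unfold grundyPattern_24_2 at h
  refine ⟨?_, ?_, fun hr => by simpa [hr] using h, fun hr => by simpa [hr] using h⟩ <;>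
    rintro (hr | hr) <;> simpa [hr] using h
end

section
/- In the game i-Mark({4,8},{2}), for every n ≥ 17 with n = 12q + r, 0 ≤ r ≤ 11: if r ∈ {1,3,4,10} then g(n) = 0; if 5 ≤ r ≤ 8 then g(n) = 1; if r ∈ {2,9,11} then g(n) = 2; and if r = 0 then g(n) ∈ {2,3}. -/
def IsMex (s : Finset ℕ) (k : ℕ) : Prop := k ∉ s ∧ ∀ j < k, j ∈ s

instance (s : Finset ℕ) (k : ℕ) : Decidable (IsMex s k) := inferInstanceAs (Decidable (_ ∧ _))

theorem mex_eq_iff {s : Finset ℕ} {k : ℕ} : mex s = k ↔ IsMex s k := by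
  constructor
  · rintro rfl
    exact ⟨Nat.sInf_mem (s := {k | k ∉ s}) s.exists_notMem,
      fun j hj => not_not.mp (Nat.notMem_of_lt_sInf hj)⟩
  · rintro ⟨hk, hlt⟩
    refine le_antisymm (Nat.sInf_le hk) (le_csInf ⟨k, hk⟩ fun j hj => ?_)
    by_contra! hjk
    exact hj (hlt j hjk)

theorem mex_mem_of_exists_isMex {s P : Finset ℕ} (h : ∃ k ∈ P, IsMex s k) : mex s ∈ P := by
  obtain ⟨k, hk, hmex⟩ := h
  rwa [mex_eq_iff.mpr hmex]

theorem grundy_eq_of_isMex {S D : Finset ℕ} {v : ℕ → ℕ} {N : ℕ}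
    (hv : ∀ n < N, IsMex ((iMarkOptions S D n).image v) (v n)) :
    ∀ n < N, grundy S D n = v n := by
  intro n
  induction n using Nat.strong_induction_on with
  | _ n ih =>
  intro hn
  have hopts : (iMarkOptions S D n).image (grundy S D) = (iMarkOptions S D n).image v :=
    Finset.image_congr fun m hm =>
      ih m (iMarkOptions_lt hm) ((iMarkOptions_lt hm).trans hn)
  rw [grundy_eq_mex_image, hopts, mex_eq_iff]
  exact hv n hn

theorem iMarkOptions_48_2_of_odd {n : ℕ} (h8 : 8 ≤ n) (hodd : ¬ 2 ∣ n) :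
    iMarkOptions {4, 8} {2} n = {n - 4, n - 8} := by
  ext m
  simp only [iMarkOptions, Finset.mem_union, Finset.mem_image, Finset.mem_filter,
    Finset.mem_insert, Finset.mem_singleton]
  constructor
  · rintro (⟨s, ⟨rfl | rfl, -⟩, rfl⟩ | ⟨d, ⟨rfl, -, hdvd, -⟩, rfl⟩)
    · exact Or.inl rfl
    · exact Or.inr rfl
    · exact absurd hdvd hodd
  · rintro (rfl | rfl)
    · exact Or.inl ⟨4, ⟨Or.inl rfl, by omega, by omega⟩, rfl⟩
    · exact Or.inl ⟨8, ⟨Or.inr rfl, by omega, by omega⟩, rfl⟩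

theorem iMarkOptions_48_2_of_even {n : ℕ} (h8 : 8 ≤ n) (heven : 2 ∣ n) :
    iMarkOptions {4, 8} {2} n = {n - 4, n - 8, n / 2} := by
  ext m
  simp only [iMarkOptions, Finset.mem_union, Finset.mem_image, Finset.mem_filter,
    Finset.mem_insert, Finset.mem_singleton]
  constructor
  · rintro (⟨s, ⟨rfl | rfl, -⟩, rfl⟩ | ⟨d, ⟨rfl, -⟩, rfl⟩)
    · exact Or.inl rfl
    · exact Or.inr (Or.inl rfl)
    · exact Or.inr (Or.inr rfl)
  · rintro (rfl | rfl | rfl)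
    · exact Or.inl ⟨4, ⟨Or.inl rfl, by omega, by omega⟩, rfl⟩
    · exact Or.inl ⟨8, ⟨Or.inr rfl, by omega, by omega⟩, rfl⟩
    · exact Or.inr ⟨2, ⟨rfl, le_rfl, heven, by omega⟩, rfl⟩

def grundyTable_48_2 : List ℕ :=
  [0, 0, 1, 0, 2, 1, 2, 1, 1, 2, 0, 2, 0, 0, 3, 0, 2, 1, 1, 1, 1, 2, 0, 2, 3, 0, 2, 0, 0, 1, 1, 1,
    1, 2]

theorem grundy_48_2_eq_table {n : ℕ} (hn : n < 34) :
    grundy {4, 8} {2} n = grundyTable_48_2.getD n 0 :=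
  grundy_eq_of_isMex (v := fun n => grundyTable_48_2.getD n 0) (by decide) n hn

def grundyPattern_48_2 : ℕ → Finset ℕ
  | 1 | 3 | 4 | 10 => {0}
  | 5 | 6 | 7 | 8 => {1}
  | 2 | 9 | 11 => {2}
  | _ => {2, 3}

theorem grundyTable_48_2_mem_pattern :
    ∀ n, 17 ≤ n → n < 34 → grundyTable_48_2.getD n 0 ∈ grundyPattern_48_2 (n % 12) := by
  decide

-- `(r + 8) % 12` and `(r + 4) % 12` are the residues of `n - 4` and `n - 8` when `n % 12 = r`.
theorem exists_isMex_pair_pattern_48_2 :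
    ∀ r < 12, r % 2 = 1 → ∀ a ∈ grundyPattern_48_2 ((r + 8) % 12),
      ∀ b ∈ grundyPattern_48_2 ((r + 4) % 12),
        ∃ k ∈ grundyPattern_48_2 r, IsMex {a, b} k := by
  decide

theorem exists_isMex_triple_pattern_48_2 :
    ∀ s < 24, s % 2 = 0 → ∀ a ∈ grundyPattern_48_2 ((s + 8) % 12),
      ∀ b ∈ grundyPattern_48_2 ((s + 4) % 12), ∀ c ∈ grundyPattern_48_2 (s / 2 % 12),
        ∃ k ∈ grundyPattern_48_2 (s % 12), IsMex {a, b, c} k := by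
  decide

theorem grundy_48_2_mem_pattern {n : ℕ} (hn : 17 ≤ n) :
    grundy {4, 8} {2} n ∈ grundyPattern_48_2 (n % 12) := by
  induction n using Nat.strong_induction_on with
  | _ n ih =>
  rcases Nat.lt_or_ge n 34 with hsmall | hlarge
  · rw [grundy_48_2_eq_table hsmall]
    exact grundyTable_48_2_mem_pattern n hn hsmall
  have ha := ih (n - 4) (by omega) (by omega)
  have hb := ih (n - 8) (by omega) (by omega)
  rw [grundy_eq_mex_image]
  apply mex_mem_of_exists_isMex
  by_cases heven : 2 ∣ n
  · have hc := ih (n / 2) (by omega) (by omega)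
    rw [show (n - 4) % 12 = (n % 24 + 8) % 12 by omega] at ha
    rw [show (n - 8) % 12 = (n % 24 + 4) % 12 by omega] at hb
    rw [show n / 2 % 12 = n % 24 / 2 % 12 by omega] at hc
    rw [iMarkOptions_48_2_of_even (by omega) heven, Finset.image_insert, Finset.image_insert,
      Finset.image_singleton, show n % 12 = n % 24 % 12 by omega]
    exact exists_isMex_triple_pattern_48_2 (n % 24) (by omega) (by omega) _ ha _ hb _ hc
  · rw [show (n - 4) % 12 = (n % 12 + 8) % 12 by omega] at ha
    rw [show (n - 8) % 12 = (n % 12 + 4) % 12 by omega] at hb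
    rw [iMarkOptions_48_2_of_odd (by omega) heven, Finset.image_insert, Finset.image_singleton]
    exact exists_isMex_pair_pattern_48_2 (n % 12) (by omega) (by omega) _ ha _ hb

/-- Sprague-Grundy values of i-Mark({4,8},{2}) for n ≥ 17. -/
theorem iMark_48_2_grundy (n : ℕ) (hn : 17 ≤ n) :
    ((n % 12 = 1 ∨ n % 12 = 3 ∨ n % 12 = 4 ∨ n % 12 = 10) → grundy {4, 8} {2} n = 0) ∧
    ((5 ≤ n % 12 ∧ n % 12 ≤ 8) → grundy {4, 8} {2} n = 1) ∧
    ((n % 12 = 2 ∨ n % 12 = 9 ∨ n % 12 = 11) → grundy {4, 8} {2} n = 2) ∧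
    (n % 12 = 0 → grundy {4, 8} {2} n = 2 ∨ grundy {4, 8} {2} n = 3) := by
  have hmem := grundy_48_2_mem_pattern hn
  have hr : n % 12 < 12 := Nat.mod_lt _ (by norm_num)
  generalize n % 12 = r at hmem hr ⊢
  interval_cases r <;> simp_all [grundyPattern_48_2]
end

section
/- Let t ≥ 2 and let D be a set of integers ≥ 2 with d ≢ 1 (mod t) for every d ∈ D. Then in the misère game i-MiMark([1,t−1],D), the set of P-positions is exactly {qt + 1 : q ≥ 0}; in particular the outcome sequence is purely periodic with period t. -/
/-! The residue class `1 + tℤ` is a misère kernel: from `n ≡ 1` every subtraction of `s ∈ [1, t-1]`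
leaves the class, and so does every division by `d ∈ D`, because `n / d ≡ 1` would force
`n = (n / d) * d ≡ d`, i.e. `d ≡ 1 (mod t)`. Conversely, from any nonempty heap outside the class,
removing `(n - 1) % t` tokens lands in it, while the empty heap has no options and is an
N-position. -/

section iMark

variable {S D : Finset ℕ}

theorem mem_iMarkOptions {n m : ℕ} :
    m ∈ iMarkOptions S D n ↔
      (∃ s ∈ S, 1 ≤ s ∧ s ≤ n ∧ m = n - s) ∨ ∃ d ∈ D, 2 ≤ d ∧ d ∣ n ∧ 1 ≤ n ∧ m = n / d := by
  simp only [iMarkOptions, Finset.mem_union, Finset.mem_image, Finset.mem_filter]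
  constructor
  · rintro (⟨s, ⟨hs, h1, hn⟩, rfl⟩ | ⟨d, ⟨hd, h2, hdn, hn⟩, rfl⟩)
    exacts [Or.inl ⟨s, hs, h1, hn, rfl⟩, Or.inr ⟨d, hd, h2, hdn, hn, rfl⟩]
  · rintro (⟨s, hs, h1, hn, rfl⟩ | ⟨d, hd, h2, hdn, hn, rfl⟩)
    exacts [Or.inl ⟨s, ⟨hs, h1, hn⟩, rfl⟩, Or.inr ⟨d, ⟨hd, h2, hdn, hn⟩, rfl⟩]

theorem sub_mem_iMarkOptions {n s : ℕ} (hs : s ∈ S) (h1 : 1 ≤ s) (hn : s ≤ n) :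
    n - s ∈ iMarkOptions S D n :=
  mem_iMarkOptions.2 (Or.inl ⟨s, hs, h1, hn, rfl⟩)

theorem iMarkOptions_zero : iMarkOptions S D 0 = ∅ :=
  Finset.eq_empty_of_forall_notMem fun _ hm => Nat.not_lt_zero _ (iMarkOptions_lt hm)

theorem misereP_iff {n : ℕ} :
    misereP S D n ↔ (iMarkOptions S D n).Nonempty ∧ ∀ m ∈ iMarkOptions S D n, ¬ misereP S D m := by
  rw [misereP]
  exact ⟨fun ⟨hne, h⟩ => ⟨hne, fun m hm => h ⟨m, hm⟩⟩, fun ⟨hne, h⟩ => ⟨hne, fun m => h m.1 m.2⟩⟩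

theorem misereP_iff_of_kernel (P : ℕ → Prop)
    (hP : ∀ n, P n → (iMarkOptions S D n).Nonempty ∧ ∀ m ∈ iMarkOptions S D n, ¬ P m)
    (hN : ∀ n, ¬ P n → iMarkOptions S D n = ∅ ∨ ∃ m ∈ iMarkOptions S D n, P m) (n : ℕ) :
    misereP S D n ↔ P n := by
  induction n using Nat.strong_induction_on with
  | _ n ih =>
  have ih' : ∀ m ∈ iMarkOptions S D n, (misereP S D m ↔ P m) := fun m hm =>
    ih m (iMarkOptions_lt hm)
  rw [misereP_iff]
  constructor
  · rintro ⟨hne, hall⟩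
    by_contra hPn
    rcases hN n hPn with hempty | ⟨m, hm, hPm⟩
    · exact hne.ne_empty hempty
    · exact hall m hm ((ih' m hm).2 hPm)
  · intro hPn
    obtain ⟨hne, hall⟩ := hP n hPn
    exact ⟨hne, fun m hm hmP => hall m hm ((ih' m hm).1 hmP)⟩

end iMark

section Residue

variable {t : ℕ}

theorem mod_eq_one_iff_exists (ht : 2 ≤ t) {n : ℕ} : n % t = 1 ↔ ∃ q, n = q * t + 1 := by
  constructor
  · intro h
    exact ⟨n / t, by rw [← h, Nat.div_add_mod']⟩
  · rintro ⟨q, rfl⟩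
    rw [Nat.mul_add_mod_self_right, Nat.mod_eq_of_lt ht]

theorem sub_mod_ne_one {n s : ℕ} (hn : n % t = 1) (h1 : 1 ≤ s) (hst : s < t) (hsn : s ≤ n) :
    (n - s) % t ≠ 1 := by
  intro h
  have hdvd : t ∣ s := by
    have : n - s ≡ n [MOD t] := h.trans hn.symm
    rw [Nat.modEq_iff_dvd' (Nat.sub_le n s), Nat.sub_sub_self hsn] at this
    exact this
  exact hst.not_ge (Nat.le_of_dvd h1 hdvd)

theorem div_mod_ne_one {n d : ℕ} (hn : n % t = 1) (hd : d % t ≠ 1) (hdn : d ∣ n) :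
    (n / d) % t ≠ 1 := by
  intro h
  have hnd := Nat.mul_mod (n / d) d t
  rw [Nat.div_mul_cancel hdn, h, one_mul, Nat.mod_mod] at hnd
  exact hd (hnd ▸ hn)

theorem exists_sub_mod_eq_one (ht : 2 ≤ t) {n : ℕ} (hn0 : n ≠ 0) (hn : n % t ≠ 1) :
    ∃ s, 1 ≤ s ∧ s ≤ t - 1 ∧ s ≤ n ∧ (n - s) % t = 1 := by
  have hdiv := Nat.div_add_mod' (n - 1) t
  have hlt := Nat.mod_lt (n - 1) (by omega : 0 < t)
  have hpos : 1 ≤ (n - 1) % t := by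
    by_contra! h0
    exact hn ((mod_eq_one_iff_exists ht).2 ⟨(n - 1) / t, by omega⟩)
  exact ⟨(n - 1) % t, hpos, by omega, by omega,
    (mod_eq_one_iff_exists ht).2 ⟨(n - 1) / t, by omega⟩⟩

end Residue

theorem iMiMark_t_D_Ppositions_general (t : ℕ) (ht : 2 ≤ t) (D : Finset ℕ)
    (hDt : ∀ d ∈ D, d % t ≠ 1) :
    ∀ n : ℕ, misereP (Finset.Icc 1 (t - 1)) D n ↔ ∃ q : ℕ, n = q * t + 1 := by
  intro n
  rw [← mod_eq_one_iff_exists ht]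
  refine misereP_iff_of_kernel (fun n => n % t = 1) (fun n hn => ⟨?_, fun m hm => ?_⟩)
    (fun n hn => ?_) n
  · have hn0 : n ≠ 0 := by rintro rfl; simp at hn
    exact ⟨n - 1, sub_mem_iMarkOptions (Finset.mem_Icc.2 ⟨le_rfl, by omega⟩) le_rfl (by omega)⟩
  · rcases mem_iMarkOptions.1 hm with ⟨s, hs, h1, hsn, rfl⟩ | ⟨d, hd, -, hdn, -, rfl⟩
    · exact sub_mod_ne_one hn h1 (by have := (Finset.mem_Icc.1 hs).2; omega) hsn
    · exact div_mod_ne_one hn (hDt d hd) hdn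
  · rcases eq_or_ne n 0 with rfl | hn0
    · exact Or.inl iMarkOptions_zero
    · obtain ⟨s, h1, hst, hsn, hs⟩ := exists_sub_mod_eq_one ht hn0 hn
      exact Or.inr ⟨n - s, sub_mem_iMarkOptions (Finset.mem_Icc.2 ⟨h1, hst⟩) h1 hsn, hs⟩

/-- P-positions of the misère game i-MiMark([1,t-1],D) when d ≢ 1 (mod t) for all d ∈ D. -/
theorem iMiMark_t_D_Ppositions (t : ℕ) (ht : 2 ≤ t) (D : Finset ℕ)
    (hD : ∀ d ∈ D, 2 ≤ d) (hDt : ∀ d ∈ D, d % t ≠ 1) :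
    ∀ n : ℕ, misereP (Finset.Icc 1 (t - 1)) D n ↔ ∃ q : ℕ, n = q * t + 1 :=
  iMiMark_t_D_Ppositions_general t ht D hDt
end
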